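/- arXiv:1010.3092 — 5 statements merged into one kernel-verified Lean document; each statement's English description precedes it below -/
import Mathlib

section
/- Let (E_j)_{j≥1} be i.i.d. Exp(1) random variables, b ≥ 2, and τ_n = Σ_{j=1}^n E_j/((b-1)(j-1)+1). Then (b-1)τ_n / log n → 1 almost surely as n → ∞. -/
/-!
By the strong law of large numbers, the partial sums `S n = E 1 + ⋯ + E n` satisfy `S n / n → 1`
almost surely, since `Exp(1)` has mean `1`. Writing `c = b - 1`, the normalised sum is
`∑ i < n, E (i + 1) / (i + a)` with `a = c⁻¹`, and the rest is deterministic. The weights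
`(i + a)⁻¹` sum to `log n + O(1)`; by Abel summation against the centred partial sums
`S n - n = o(n)`, the fluctuation `∑ (E (i + 1) - 1) / (i + a)` is
`o(1) + ∑ o(i) · O(i⁻²) = o(log n)`.
-/

open MeasureTheory ProbabilityTheory Filter Finset Asymptotics

section ExponentialMean

variable {r : ℝ}

lemma exponentialPDFReal_mul_self_eq_indicator (r : ℝ) :
    (fun x => exponentialPDFReal r x * x)
      = (Set.Ioi 0).indicator fun x => r * (x ^ ((2 : ℝ) - 1) * Real.exp (-(r * x))) := by
  ext x
  rcases lt_trichotomy x 0 with hx | rfl | hx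
  · simp [exponentialPDFReal, gammaPDFReal, not_le.2 hx, not_lt.2 hx.le]
  · simp
  · simp only [exponentialPDFReal, gammaPDFReal, Set.indicator_of_mem (Set.mem_Ioi.2 hx),
      if_pos hx.le, Real.rpow_one, Real.Gamma_one, div_one, sub_self, Real.rpow_zero, mul_one]
    rw [show (2 : ℝ) - 1 = 1 by norm_num, Real.rpow_one]
    ring

lemma integral_exponentialPDFReal_mul_self (hr : 0 < r) :
    ∫ x, exponentialPDFReal r x * x = r⁻¹ := by
  rw [exponentialPDFReal_mul_self_eq_indicator, integral_indicator measurableSet_Ioi,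
    integral_const_mul, Real.integral_rpow_mul_exp_neg_mul_Ioi two_pos hr, Real.Gamma_two,
    Real.rpow_two]
  field_simp

lemma expMeasure_eq_withDensity : expMeasure r = volume.withDensity (exponentialPDF r) := rfl

lemma measurable_exponentialPDF (r : ℝ) : Measurable (exponentialPDF r) :=
  (measurable_exponentialPDFReal r).ennreal_ofReal

lemma integrable_id_expMeasure (hr : 0 < r) : Integrable id (expMeasure r) := by
  rw [expMeasure_eq_withDensity, integrable_withDensity_iff_integrable_smul'
    (measurable_exponentialPDF r) (ae_of_all _ fun _ => ENNReal.ofReal_lt_top)]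
  -- a non-integrable function would have integral `0`, not `r⁻¹`
  refine Integrable.of_integral_ne_zero ?_
  simp only [exponentialPDF, ENNReal.toReal_ofReal (exponentialPDFReal_nonneg hr _), id,
    smul_eq_mul]
  rw [integral_exponentialPDFReal_mul_self hr]
  positivity

lemma integral_id_expMeasure (hr : 0 < r) : ∫ x, x ∂expMeasure r = r⁻¹ := by
  rw [expMeasure_eq_withDensity, integral_withDensity_eq_integral_toReal_smul
    (measurable_exponentialPDF r) (ae_of_all _ fun _ => ENNReal.ofReal_lt_top)]
  simp only [exponentialPDF, ENNReal.toReal_ofReal (exponentialPDFReal_nonneg hr _), smul_eq_mul]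
  exact integral_exponentialPDFReal_mul_self hr

end ExponentialMean

theorem ae_tendsto_sum_range_div_of_map_eq {Ω : Type*} {m : MeasurableSpace Ω} {P : Measure Ω}
    {μ : Measure ℝ} [NeZero μ] {X : ℕ → Ω → ℝ} (hindep : Pairwise fun i j => X i ⟂ᵢ[P] X j)
    (hX : ∀ i, P.map (X i) = μ) (hμ : Integrable id μ) :
    ∀ᵐ ω ∂P, Tendsto (fun n : ℕ => (∑ i ∈ range n, X i ω) / n) atTop (nhds (∫ x, x ∂μ)) := by
  have hmeas (i : ℕ) : AEMeasurable (X i) P :=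
    aemeasurable_of_map_neZero (by rw [hX i]; infer_instance)
  have hint : Integrable (X 0) P :=
    (integrable_map_measure (g := id) (by rw [hX 0]; exact hμ.aestronglyMeasurable)
      (hmeas 0)).1 (by rwa [hX 0])
  have hmean : P[X 0] = ∫ x, x ∂μ := by
    rw [← hX 0, integral_map (hmeas 0) (by rw [hX 0]; exact aestronglyMeasurable_id)]
  simpa only [hmean] using
    strong_law_ae_real X hint hindep fun i => ⟨hmeas i, hmeas 0, by rw [hX, hX]⟩

lemma sum_range_mul_by_parts (y w : ℕ → ℝ) (n : ℕ) :
    ∑ i ∈ range n, y i * w i = (∑ i ∈ range n, y i) * w n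
      + ∑ i ∈ range n, (∑ j ∈ range (i + 1), y j) * (w i - w (i + 1)) := by
  induction n with
  | zero => simp
  | succ n ih =>
    simp only [sum_range_succ _ n, ih]
    ring

lemma tendsto_norm_log_natCast_atTop : Tendsto (fun n : ℕ => ‖Real.log n‖) atTop atTop :=
  tendsto_norm_atTop_atTop.comp (Real.tendsto_log_atTop.comp tendsto_natCast_atTop_atTop)

lemma sum_range_inv_succ_eq_harmonic (n : ℕ) :
    ∑ i ∈ range n, ((i : ℝ) + 1)⁻¹ = harmonic n := by
  simp [harmonic]

lemma tendsto_sum_range_inv_succ_atTop :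
    Tendsto (fun n => ∑ i ∈ range n, ((i : ℝ) + 1)⁻¹) atTop atTop := by
  simpa only [one_div] using Real.tendsto_sum_range_one_div_nat_succ_atTop

lemma isEquivalent_harmonic_log :
    (fun n : ℕ => (harmonic n : ℝ)) ~[atTop] fun n => Real.log n :=
  IsLittleO.isEquivalent <| (Real.tendsto_harmonic_sub_log.isBigO_one ℝ).trans_isLittleO <|
    (isLittleO_one_left_iff ℝ).2 tendsto_norm_log_natCast_atTop

lemma Asymptotics.IsEquivalent.sum_range {f g : ℕ → ℝ} (h : f ~[atTop] g) (hg : 0 ≤ g)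
    (h'g : Tendsto (fun n => ∑ i ∈ range n, g i) atTop atTop) :
    (fun n => ∑ i ∈ range n, f i) ~[atTop] fun n => ∑ i ∈ range n, g i := by
  refine (h.isLittleO.sum_range hg h'g).congr_left fun n => ?_
  simp only [Pi.sub_apply, sum_sub_distrib]

theorem isLittleO_log_sum_range_mul {y w : ℕ → ℝ}
    (hy : (fun n => ∑ i ∈ range n, y i) =o[atTop] fun n => (n : ℝ))
    (hw : w =O[atTop] fun n => (n : ℝ)⁻¹)
    (hdw : (fun n => w n - w (n + 1)) =O[atTop] fun n => ((n : ℝ) ^ 2)⁻¹) :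
    (fun n => ∑ i ∈ range n, y i * w i) =o[atTop] fun n => Real.log n := by
  have hlog : (fun _ : ℕ => (1 : ℝ)) =o[atTop] fun n => Real.log n :=
    (isLittleO_one_left_iff ℝ).2 tendsto_norm_log_natCast_atTop
  refine (IsLittleO.add ?_ ?_).congr_left fun n => (sum_range_mul_by_parts y w n).symm
  · refine ((hy.mul_isBigO hw).trans_isBigO ?_).trans hlog
    refine IsBigO.of_bound 1 (Eventually.of_forall fun n => ?_)
    rw [norm_one, one_mul, Real.norm_of_nonneg (by positivity)]
    exact mul_inv_le_one
  · have hterm : (fun i => (∑ j ∈ range (i + 1), y j) * (w i - w (i + 1)))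
        =o[atTop] fun i => ((i : ℝ) + 1)⁻¹ := by
      refine ((hy.comp_tendsto (tendsto_add_atTop_nat 1)).mul_isBigO hdw).trans_isBigO ?_
      refine IsBigO.of_bound 4 ?_
      filter_upwards [eventually_ge_atTop 1] with i hi
      have : (1 : ℝ) ≤ i := by exact_mod_cast hi
      simp only [Function.comp_apply, Nat.cast_add, Nat.cast_one]
      rw [Real.norm_of_nonneg (by positivity), Real.norm_of_nonneg (by positivity),
        ← div_eq_mul_inv, ← div_eq_mul_inv, div_le_div_iff₀ (by positivity) (by positivity)]
      nlinarith
    have hsum := hterm.sum_range (fun i => by positivity) tendsto_sum_range_inv_succ_atTop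
    simp only [sum_range_inv_succ_eq_harmonic] at hsum
    exact hsum.trans_isBigO isEquivalent_harmonic_log.isBigO

lemma isEquivalent_natCast_add_const (a : ℝ) :
    (fun n : ℕ => (n : ℝ) + a) ~[atTop] fun n => (n : ℝ) := by
  have : (fun _ : ℕ => a) =o[atTop] fun n => (n : ℝ) :=
    isLittleO_const_left.2 (Or.inr (tendsto_norm_atTop_atTop.comp tendsto_natCast_atTop_atTop))
  exact IsLittleO.isEquivalent (this.congr_left fun n => by simp)

lemma isEquivalent_sum_range_inv_add_const_log (a : ℝ) :
    (fun n => ∑ i ∈ range n, ((i : ℝ) + a)⁻¹) ~[atTop] fun n => Real.log n := by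
  have hterm : (fun i : ℕ => ((i : ℝ) + a)⁻¹) ~[atTop] fun i => ((i : ℝ) + 1)⁻¹ :=
    ((isEquivalent_natCast_add_const a).trans (isEquivalent_natCast_add_const 1).symm).inv
  have hsum := hterm.sum_range (fun i => by positivity) tendsto_sum_range_inv_succ_atTop
  simp only [sum_range_inv_succ_eq_harmonic] at hsum
  exact IsEquivalent.trans hsum isEquivalent_harmonic_log

section InvAddConst

variable {a : ℝ}

lemma isBigO_inv_add_const (ha : 0 < a) :
    (fun n : ℕ => ((n : ℝ) + a)⁻¹) =O[atTop] fun n => (n : ℝ)⁻¹ := by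
  refine IsBigO.of_bound 1 ?_
  filter_upwards [eventually_ge_atTop 1] with n hn
  have : (0 : ℝ) < n := by exact_mod_cast hn
  rw [one_mul, Real.norm_of_nonneg (by positivity), Real.norm_of_nonneg (by positivity)]
  exact inv_anti₀ this (by linarith)

lemma inv_add_const_sub_inv_add_const_succ (ha : 0 < a) (n : ℕ) :
    ((n : ℝ) + a)⁻¹ - (((n + 1 : ℕ) : ℝ) + a)⁻¹ = (((n : ℝ) + a) * ((n : ℝ) + 1 + a))⁻¹ := by
  push_cast
  rw [inv_sub_inv (by positivity) (by positivity)]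
  field_simp
  ring

lemma isBigO_inv_add_const_sub_succ (ha : 0 < a) :
    (fun n : ℕ => ((n : ℝ) + a)⁻¹ - (((n + 1 : ℕ) : ℝ) + a)⁻¹) =O[atTop]
      fun n => ((n : ℝ) ^ 2)⁻¹ := by
  refine IsBigO.of_bound 1 ?_
  filter_upwards [eventually_ge_atTop 1] with n hn
  have : (0 : ℝ) < n := by exact_mod_cast hn
  rw [inv_add_const_sub_inv_add_const_succ ha, one_mul, Real.norm_of_nonneg (by positivity),
    Real.norm_of_nonneg (by positivity)]
  exact inv_anti₀ (by positivity) (by nlinarith)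

theorem tendsto_sum_range_div_add_const_div_log (ha : 0 < a) {x : ℕ → ℝ}
    (hx : Tendsto (fun n : ℕ => (∑ i ∈ range n, x i) / n) atTop (nhds 1)) :
    Tendsto (fun n : ℕ => (∑ i ∈ range n, x i / (i + a)) / Real.log n) atTop (nhds 1) := by
  have hy : (fun n => ∑ i ∈ range n, (x i - 1)) =o[atTop] fun n => (n : ℝ) := by
    rw [isLittleO_iff_tendsto' (Eventually.of_forall fun n hn => by simp_all)]
    refine (sub_self (1 : ℝ) ▸ hx.sub_const 1).congr' ?_
    filter_upwards [eventually_ne_atTop 0] with n hn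
    simp [sum_sub_distrib, sub_div, hn]
  have hsum := (isEquivalent_sum_range_inv_add_const_log a).add_isLittleO
    (isLittleO_log_sum_range_mul hy (isBigO_inv_add_const ha) (isBigO_inv_add_const_sub_succ ha))
  refine ((isEquivalent_iff_tendsto_one ?_).1 hsum).congr fun n => ?_
  · filter_upwards [eventually_gt_atTop 1] with n hn
    exact (Real.log_pos (by exact_mod_cast hn)).ne'
  · simp only [Pi.add_apply, Pi.div_apply, ← sum_add_distrib]
    congr 1
    refine sum_congr rfl fun i _ => ?_
    ring

end InvAddConst

theorem tau_log_asymptotic_general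
    {Ω : Type*} [MeasureSpace Ω]
    (b : ℕ) (hb : 2 ≤ b) (E : ℕ → Ω → ℝ)
    (hInd : iIndepFun (m := fun _ => Real.measurableSpace) E ℙ)
    (hExp : ∀ j, Measure.map (E j) ℙ = expMeasure 1) :
    ∀ᵐ ω ∂ℙ, Filter.Tendsto
      (fun n : ℕ =>
        ((b : ℝ) - 1) * (∑ j ∈ Finset.Icc 1 n, E j ω / (((b : ℝ) - 1) * (j - 1 : ℕ) + 1))
          / Real.log n)
      atTop (nhds 1) := by
  have hc : (0 : ℝ) < (b : ℝ) - 1 := by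
    have : (2 : ℝ) ≤ b := by exact_mod_cast hb
    linarith
  have : IsProbabilityMeasure (expMeasure 1) := isProbabilityMeasure_expMeasure one_pos
  have hLLN := ae_tendsto_sum_range_div_of_map_eq (X := fun i => E (i + 1))
    (fun i j hij => hInd.indepFun (by simpa using hij)) (fun i => hExp (i + 1))
    (integrable_id_expMeasure one_pos)
  rw [integral_id_expMeasure one_pos, inv_one] at hLLN
  filter_upwards [hLLN] with ω hω
  refine (tendsto_sum_range_div_add_const_div_log (inv_pos.2 hc) hω).congr fun n => ?_
  rw [← Finset.Ico_add_one_right_eq_Icc, Finset.sum_Ico_eq_sum_range, Nat.add_sub_cancel, mul_sum]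
  congr 1
  refine sum_congr rfl fun i _ => ?_
  rw [add_comm 1 i, Nat.add_sub_cancel]
  field_simp

/-- `(b-1) τ_n / log n → 1` almost surely, where
`τ_n = Σ_{j=1}^n E_j/((b-1)(j-1)+1)` with `(E_j)` i.i.d. `Exp(1)`. -/
theorem tau_log_asymptotic
    {Ω : Type*} [MeasureSpace Ω] [IsProbabilityMeasure (ℙ : Measure Ω)]
    (b : ℕ) (hb : 2 ≤ b) (E : ℕ → Ω → ℝ)
    (hInd : iIndepFun (m := fun _ => Real.measurableSpace) E ℙ)
    (hExp : ∀ j, Measure.map (E j) ℙ = expMeasure 1) :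
    ∀ᵐ ω ∂ℙ, Filter.Tendsto
      (fun n : ℕ =>
        ((b : ℝ) - 1) * (∑ j ∈ Finset.Icc 1 n, E j ω / (((b : ℝ) - 1) * (j - 1 : ℕ) + 1))
          / Real.log n)
      atTop (nhds 1) :=
  tau_log_asymptotic_general b hb E hInd hExp
end

section
/- Let δ > 0, α ∈ ℝ, b ≥ 2 and let τ_n = Σ_{j=1}^n E_j/((b-1)(j-1)+1) with (E_j) i.i.d. Exp(1). If log(δ^α) < 1 then E[(δ^α)^{τ_n}] = Π_{j=1}^n ((b-1)(j-1)+1)/((b-1)(j-1)+1 - log δ^α), and consequently E[(δ^α)^{τ_n}] ~ (Γ((log(1/δ)^α + 1)/(b-1))/Γ(1/(b-1))) · n^{-log(1/δ)^α/(b-1)} as n → ∞. -/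
/-!
Since `(δ^α)^τ_n = exp (log (δ^α) · τ_n)`, the expectation is the moment generating function of
`τ_n` at `c = log (δ^α)`. By independence it factors, and `E_j / a_j`, where
`a_j = (b - 1)(j - 1) + 1`, has mgf `a_j / (a_j - c)`. Writing `a_{k+1} = B (x + k)` and `a_{k+1} - c = B (y + k)` with `B = b - 1`,
`x = 1/B`, `y = (1 - c)/B`, the product becomes `∏_{k<n} (x + k)/(y + k)`, and Euler's limit
formula `Γ(s) = lim n^s n! / (s (s+1) ⋯ (s+n))` shows it is asymptotic to `Γ(y)/Γ(x) · n^(x-y)`.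
-/

open MeasureTheory ProbabilityTheory Filter Finset Real
open scoped Topology

lemma mgf_id_expMeasure {r t : ℝ} (hr : 0 < r) (ht : t < r) :
    mgf id (expMeasure r) t = r / (r - t) := by
  have hdens : ∀ x, exponentialPDFReal r x * exp (t * x)
      = Set.indicator (Set.Ici 0) (fun x => r * exp ((t - r) * x)) x := by
    intro x
    by_cases hx : 0 ≤ x
    · rw [Set.indicator_of_mem (Set.mem_Ici.2 hx), exponentialPDFReal, gammaPDFReal, if_pos hx]
      simp only [rpow_one, Gamma_one, div_one, sub_self, rpow_zero, mul_one, mul_assoc, ← exp_add]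
      ring_nf
    · simp [exponentialPDFReal, gammaPDFReal, hx]
  calc mgf id (expMeasure r) t
      = ∫ x, exponentialPDFReal r x * exp (t * x) := by
        rw [mgf, expMeasure, gammaMeasure,
          integral_withDensity_eq_integral_toReal_smul (f := gammaPDF 1 r)
            (measurable_gammaPDFReal 1 r).ennreal_ofReal]
        · simp_rw [gammaPDF, ENNReal.toReal_ofReal (gammaPDFReal_nonneg zero_lt_one hr _),
            smul_eq_mul, id]
          rfl
        · exact ae_of_all _ fun _ => ENNReal.ofReal_lt_top
    _ = r * ∫ x in Set.Ioi 0, exp ((t - r) * x) := by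
        simp_rw [hdens, integral_indicator measurableSet_Ici, integral_Ici_eq_integral_Ioi,
          integral_const_mul]
    _ = r / (r - t) := by
        rw [integral_exp_mul_Ioi (by linarith) 0, mul_zero, exp_zero, neg_div, ← div_neg,
          neg_sub, mul_one_div]

lemma mgf_of_map_eq_expMeasure {Ω : Type*} [MeasurableSpace Ω] {μ : Measure Ω} {X : Ω → ℝ}
    {r t : ℝ} (hr : 0 < r) (hX : μ.map X = expMeasure r) (ht : t < r) :
    mgf X μ t = r / (r - t) := by
  have := isProbabilityMeasure_expMeasure hr
  have hXm : AEMeasurable X μ := .of_map_ne_zero (hX ▸ IsProbabilityMeasure.ne_zero _)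
  rw [← mgf_id_map hXm, hX, mgf_id_expMeasure hr ht]

lemma ProbabilityTheory.iIndepFun.mgf_sum_div_of_map_eq_expMeasure {ι Ω : Type*}
    [MeasurableSpace Ω] {μ : Measure Ω} {E : ι → Ω → ℝ} (hInd : iIndepFun E μ)
    (hExp : ∀ i, μ.map (E i) = expMeasure 1) (s : Finset ι) {a : ι → ℝ} {t : ℝ}
    (ha : ∀ i ∈ s, 0 < a i) (ht : ∀ i ∈ s, t < a i) :
    mgf (fun ω => ∑ i ∈ s, E i ω / a i) μ t = ∏ i ∈ s, a i / (a i - t) := by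
  have hE : ∀ i, AEMeasurable (E i) μ := fun i =>
    .of_map_ne_zero (hExp i ▸ (isProbabilityMeasure_expMeasure one_pos).ne_zero)
  have hsum : (fun ω => ∑ i ∈ s, E i ω / a i) = ∑ i ∈ s, (fun x => (a i)⁻¹ * x) ∘ E i := by
    ext ω
    simp [div_eq_inv_mul]
  rw [hsum, (hInd.comp (fun i x => (a i)⁻¹ * x) fun i => measurable_const_mul _).mgf_sum₀
    (fun i => (hE i).const_mul _)]
  refine prod_congr rfl fun i hi => ?_
  have hai := ha i hi
  rw [Function.comp_def, mgf_const_mul, mgf_of_map_eq_expMeasure one_pos (hExp i)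
    ((inv_mul_lt_one₀ hai).2 (ht i hi))]
  field_simp

lemma tendsto_prod_range_div_mul_rpow {x y : ℝ} (hx : 0 < x) (hy : 0 < y) :
    Tendsto (fun n : ℕ => (∏ k ∈ range n, (x + k) / (y + k)) * (n : ℝ) ^ (y - x)) atTop
      (𝓝 (Gamma y / Gamma x)) := by
  have hratio :=
    (GammaSeq_tendsto_Gamma y).div (GammaSeq_tendsto_Gamma x) (Gamma_pos_of_pos hx).ne'
  have hlast : Tendsto (fun n : ℕ => (y + n) / (x + n)) atTop (𝓝 1) := by
    simpa using tendsto_add_mul_div_add_mul_atTop_nhds y x 1 one_ne_zero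
  refine (mul_one (Gamma y / Gamma x) ▸ hratio.mul hlast).congr' ?_
  filter_upwards [eventually_gt_atTop 0] with n hn
  have hxk : ∀ k : ℕ, 0 < x + k := fun k => by positivity
  have hyk : ∀ k : ℕ, 0 < y + k := fun k => by positivity
  have hPx := prod_pos fun k (_ : k ∈ range n) => hxk k
  have hPy := prod_pos fun k (_ : k ∈ range n) => hyk k
  -- `GammaSeq s n = n ^ s * n! / ∏_{k ≤ n} (s + k)`: the ratio is our product times the extra
  -- factor `(x + n) / (y + n)`, cancelled by `hlast`.
  simp only [Pi.div_apply, GammaSeq]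
  rw [prod_range_succ, prod_range_succ, prod_div_distrib, rpow_sub (Nat.cast_pos.2 hn)]
  field_simp [(hxk n).ne', (hyk n).ne']

lemma tendsto_prod_range_div_div_Gamma_mul_rpow {x y : ℝ} (hx : 0 < x) (hy : 0 < y) :
    Tendsto (fun n : ℕ => (∏ k ∈ range n, (x + k) / (y + k))
      / (Gamma y / Gamma x * (n : ℝ) ^ (x - y))) atTop (𝓝 1) := by
  have hL : Gamma y / Gamma x ≠ 0 := (div_pos (Gamma_pos_of_pos hy) (Gamma_pos_of_pos hx)).ne'
  refine (div_self hL ▸ (tendsto_prod_range_div_mul_rpow hx hy).div_const _).congr' ?_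
  filter_upwards [eventually_gt_atTop 0] with n hn
  have := rpow_pos_of_pos (Nat.cast_pos.2 hn : (0 : ℝ) < n) (y - x)
  rw [← neg_sub y x, rpow_neg (Nat.cast_nonneg n)]
  field_simp

lemma prod_Icc_div_sub_eq_prod_range {B : ℝ} (hB : B ≠ 0) (c : ℝ) (n : ℕ) :
    ∏ j ∈ Icc 1 n, (B * (j - 1 : ℕ) + 1) / (B * (j - 1 : ℕ) + 1 - c)
      = ∏ k ∈ range n, (1 / B + k) / ((1 - c) / B + k) := by
  rw [← Ico_add_one_right_eq_Icc, prod_Ico_eq_prod_range, Nat.add_sub_cancel]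
  refine prod_congr rfl fun k _ => ?_
  rw [Nat.add_sub_cancel_left]
  field_simp
  ring_nf

theorem moment_generating_tau_general
    {Ω : Type*} [MeasureSpace Ω]
    (b : ℕ) (hb : 2 ≤ b) (E : ℕ → Ω → ℝ)
    (hInd : iIndepFun (m := fun _ => Real.measurableSpace) E ℙ)
    (hExp : ∀ j, Measure.map (E j) ℙ = expMeasure 1)
    (δ α : ℝ) (hδ : 0 < δ) (hlog : Real.log (δ ^ α) < 1) :
    (∀ n : ℕ,
      ∫ ω, (δ ^ α) ^ (∑ j ∈ Finset.Icc 1 n, E j ω / (((b : ℝ) - 1) * (j - 1 : ℕ) + 1)) ∂ℙ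
        = ∏ j ∈ Finset.Icc 1 n,
            (((b : ℝ) - 1) * (j - 1 : ℕ) + 1)
              / (((b : ℝ) - 1) * (j - 1 : ℕ) + 1 - Real.log (δ ^ α))) ∧
    Filter.Tendsto
      (fun n : ℕ =>
        (∫ ω, (δ ^ α) ^ (∑ j ∈ Finset.Icc 1 n,
            E j ω / (((b : ℝ) - 1) * (j - 1 : ℕ) + 1)) ∂ℙ)
          / ((Real.Gamma ((α * Real.log (1 / δ) + 1) / ((b : ℝ) - 1))
                / Real.Gamma (1 / ((b : ℝ) - 1)))
              * (n : ℝ) ^ (-(α * Real.log (1 / δ)) / ((b : ℝ) - 1))))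
      atTop (nhds 1) := by
  have hαδ : α * log (1 / δ) = -log (δ ^ α) := by
    rw [one_div, log_inv, log_rpow hδ]; ring
  set c := log (δ ^ α)
  set B : ℝ := b - 1
  have hB : 0 < B := sub_pos.2 (by exact_mod_cast hb)
  have ha : ∀ j : ℕ, 1 ≤ B * (j - 1 : ℕ) + 1 := fun j =>
    le_add_of_nonneg_left (by positivity)
  have hformula : ∀ n : ℕ, ∫ ω, (δ ^ α) ^ (∑ j ∈ Icc 1 n, E j ω / (B * (j - 1 : ℕ) + 1)) ∂ℙ
      = ∏ j ∈ Icc 1 n, (B * (j - 1 : ℕ) + 1) / (B * (j - 1 : ℕ) + 1 - c) := fun n => by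
    simp_rw [rpow_def_of_pos (rpow_pos_of_pos hδ α)]
    exact hInd.mgf_sum_div_of_map_eq_expMeasure hExp _ (fun j _ => one_pos.trans_le (ha j))
      fun j _ => hlog.trans_le (ha j)
  refine ⟨hformula, ?_⟩
  have hexponent : -(-c) / B = 1 / B - (1 - c) / B := by ring
  simp_rw [hformula, prod_Icc_div_sub_eq_prod_range hB.ne', hαδ, neg_add_eq_sub, hexponent]
  exact tendsto_prod_range_div_div_Gamma_mul_rpow (by positivity) (div_pos (by linarith) hB)

/-- Exact formula and asymptotics for `E[(δ^α)^{τ_n}]` where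
`τ_n = Σ_{j=1}^n E_j/((b-1)(j-1)+1)` with `(E_j)` i.i.d. `Exp(1)`. -/
theorem moment_generating_tau
    {Ω : Type*} [MeasureSpace Ω] [IsProbabilityMeasure (ℙ : Measure Ω)]
    (b : ℕ) (hb : 2 ≤ b) (E : ℕ → Ω → ℝ)
    (hInd : iIndepFun (m := fun _ => Real.measurableSpace) E ℙ)
    (hExp : ∀ j, Measure.map (E j) ℙ = expMeasure 1)
    (δ α : ℝ) (hδ : 0 < δ) (hlog : Real.log (δ ^ α) < 1) :
    (∀ n : ℕ,
      ∫ ω, (δ ^ α) ^ (∑ j ∈ Finset.Icc 1 n, E j ω / (((b : ℝ) - 1) * (j - 1 : ℕ) + 1)) ∂ℙ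
        = ∏ j ∈ Finset.Icc 1 n,
            (((b : ℝ) - 1) * (j - 1 : ℕ) + 1)
              / (((b : ℝ) - 1) * (j - 1 : ℕ) + 1 - Real.log (δ ^ α))) ∧
    Filter.Tendsto
      (fun n : ℕ =>
        (∫ ω, (δ ^ α) ^ (∑ j ∈ Finset.Icc 1 n,
            E j ω / (((b : ℝ) - 1) * (j - 1 : ℕ) + 1)) ∂ℙ)
          / ((Real.Gamma ((α * Real.log (1 / δ) + 1) / ((b : ℝ) - 1))
                / Real.Gamma (1 / ((b : ℝ) - 1)))
              * (n : ℝ) ^ (-(α * Real.log (1 / δ)) / ((b : ℝ) - 1))))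
      atTop (nhds 1) :=
  moment_generating_tau_general b hb E hInd hExp δ α hδ hlog
end

section
/- For the Poisson distribution with parameter λ, the local limit theorem holds: sup_l |√(2πλ) P(X_λ = l) − exp(−(l−λ)²/(2λ))| → 0 as λ → ∞, where X_λ is Poisson(λ). -/
/-!
Put `x = l / λ` and `klFun x = x log x + 1 - x`. Stirling's formula turns `√(2πλ) P(X_λ = l)`
into `(√π / s_l) · √(λ / l) · exp (-λ klFun x)`, where `s_l ↓ √π` is the Stirling sequence,
and `(l / e)^l ≤ l!` gives the Chernoff bound `P(X_λ = l) ≤ exp (-λ klFun x)` for every `l`.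
Where `|x - 1| ≤ τ`, the expansion `klFun x = (x - 1)² / 2 + O(|x - 1|³)` bounds the error by
`O(1 - √π / s_l + τ + λτ³)`; where `|x - 1| ≥ τ`, convexity gives `klFun x ≥ τ² / 4`, so both
terms are `O(√λ e^{-λτ²/4})`. With `τ = λ^{-2/5}` all of these tend to `0` uniformly in `l`.
-/

open Filter Real Nat InformationTheory Topology

namespace InformationTheory

lemma abs_klFun_sub_sq_le {x : ℝ} (hx : |x - 1| ≤ 1 / 2) :
    |klFun x - (x - 1) ^ 2 / 2| ≤ 4 * |x - 1| ^ 3 := by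
  set u := x - 1
  have hlog := Real.abs_log_sub_add_sum_range_le (x := -u) (by rw [abs_neg]; linarith) 2
  simp only [Finset.sum_range_succ, Finset.sum_range_zero, abs_neg, sub_neg_eq_add] at hlog
  set R := log (1 + u) - (u - u ^ 2 / 2) with hR
  have hRu : |R| ≤ 2 * |u| ^ 3 := by
    have : |R| ≤ |u| ^ 3 / (1 - |u|) := by
      convert hlog using 2; rw [hR]; push_cast; ring
    refine this.trans ?_
    rw [div_le_iff₀ (by linarith)]
    nlinarith [pow_nonneg (abs_nonneg u) 3]
  have hkl : klFun x - u ^ 2 / 2 = -u ^ 3 / 2 + (1 + u) * R := by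
    rw [klFun_apply, hR, show x = 1 + u by ring]; ring
  rw [hkl]
  calc |-u ^ 3 / 2 + (1 + u) * R| ≤ |u| ^ 3 / 2 + (3 / 2) * (2 * |u| ^ 3) := by
        refine (abs_add_le _ _).trans (add_le_add (by simp [abs_div, abs_neg, abs_pow]) ?_)
        rw [abs_mul]
        gcongr
        exact (abs_add_le _ _).trans (by rw [abs_one]; linarith)
    _ ≤ 4 * |u| ^ 3 := by nlinarith [pow_nonneg (abs_nonneg u) 3]

lemma sq_sub_one_div_four_le_klFun {x : ℝ} (hx : |x - 1| ≤ 1 / 16) :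
    (x - 1) ^ 2 / 4 ≤ klFun x := by
  have h := (abs_le.1 (abs_klFun_sub_sq_le (hx.trans (by norm_num)))).1
  have : 4 * |x - 1| ^ 3 ≤ (x - 1) ^ 2 / 4 := by
    rw [← sq_abs (x - 1)]; nlinarith [sq_nonneg |x - 1|, abs_nonneg (x - 1)]
  linarith

lemma sq_div_four_le_klFun {τ x : ℝ} (hτ : 0 < τ) (hτ' : τ ≤ 1 / 16) (hx : 0 ≤ x)
    (hτx : τ ≤ |x - 1|) : τ ^ 2 / 4 ≤ klFun x := by
  have hnear : ∀ y, |y - 1| = τ → τ ^ 2 / 4 ≤ klFun y := fun y hy => by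
    simpa [← sq_abs (y - 1), hy] using sq_sub_one_div_four_le_klFun (x := y) (by rw [hy]; exact hτ')
  rcases le_or_gt 1 x with h1 | h1
  · refine (hnear (1 + τ) (by simp [abs_of_pos hτ])).trans ?_
    refine convexOn_klFun.le_right_of_left_le'' (x := 1) (by simp) hx (by linarith) ?_ ?_
    · rw [abs_of_nonneg (by linarith)] at hτx; linarith
    · exact klFun_one ▸ klFun_nonneg (by linarith)
  · refine (hnear (1 - τ) (by simp [abs_of_pos hτ])).trans ?_
    refine convexOn_klFun.le_left_of_right_le'' (z := 1) hx (by simp) ?_ (by linarith) ?_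
    · rw [abs_of_neg (by linarith)] at hτx; linarith
    · exact klFun_one ▸ klFun_nonneg (by linarith)

end InformationTheory

lemma abs_exp_neg_sub_exp_neg_le {a b : ℝ} (ha : 0 ≤ a) (hb : 0 ≤ b) :
    |exp (-a) - exp (-b)| ≤ |a - b| := by
  wlog hab : a ≤ b generalizing a b
  · rw [abs_sub_comm, abs_sub_comm a]; exact this hb ha (by linarith)
  have hexp : exp (-a) - exp (-b) = exp (-a) * (1 - exp (-(b - a))) := by
    rw [mul_sub, ← exp_add]; ring_nf
  rw [hexp, abs_of_nonneg (by have := exp_le_exp.2 (by linarith : -b ≤ -a); linarith),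
    abs_of_nonpos (by linarith)]
  calc exp (-a) * (1 - exp (-(b - a))) ≤ 1 * (1 - exp (-(b - a))) :=
        mul_le_mul_of_nonneg_right (exp_le_one_iff.2 (by linarith))
          (sub_nonneg.2 (exp_le_one_iff.2 (by linarith)))
    _ ≤ -(a - b) := by linarith [one_sub_le_exp_neg (b - a)]

lemma tendsto_rpow_mul_exp_neg_mul_rpow_atTop_nhds_zero (s : ℝ) {b r : ℝ} (hb : 0 < b)
    (hr : 0 < r) : Tendsto (fun x : ℝ => x ^ s * exp (-b * x ^ r)) atTop (𝓝 0) := by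
  refine ((tendsto_rpow_mul_exp_neg_mul_atTop_nhds_zero (s / r) b hb).comp
    (tendsto_rpow_atTop hr)).congr' ?_
  filter_upwards [eventually_ge_atTop 0] with x hx
  simp [← rpow_mul hx, mul_div_cancel₀ _ hr.ne']

lemma abs_sqrt_inv_sub_one_le {x : ℝ} (hx : |x - 1| ≤ 1 / 2) : |√x⁻¹ - 1| ≤ 2 * |x - 1| := by
  have hx0 : 1 / 2 ≤ x := by linarith [(abs_le.1 hx).1]
  have hs := sq_sqrt (inv_nonneg.2 (by linarith : (0:ℝ) ≤ x))
  calc |√x⁻¹ - 1| ≤ |√x⁻¹ - 1| * (√x⁻¹ + 1) :=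
        le_mul_of_one_le_right (abs_nonneg _) (by linarith [sqrt_nonneg x⁻¹])
    _ = |x - 1| / x := by
        rw [← abs_of_nonneg (by positivity : 0 ≤ √x⁻¹ + 1), ← abs_mul,
          show (√x⁻¹ - 1) * (√x⁻¹ + 1) = -((x - 1) / x) by
            rw [show (√x⁻¹ - 1) * (√x⁻¹ + 1) = √x⁻¹ ^ 2 - 1 by ring, hs]
            field_simp; ring,
          abs_neg, abs_div, abs_of_pos (by linarith : 0 < x)]
    _ ≤ 2 * |x - 1| := by
        rw [div_le_iff₀ (by linarith)]; nlinarith [abs_nonneg (x - 1)]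

namespace Stirling

lemma sqrt_pi_div_stirlingSeq_le_one {n : ℕ} (hn : n ≠ 0) : √π / stirlingSeq n ≤ 1 :=
  div_le_one_of_le₀ (sqrt_pi_le_stirlingSeq hn)
    ((sqrt_pos.2 pi_pos).trans_le (sqrt_pi_le_stirlingSeq hn)).le

lemma sqrt_pi_div_stirlingSeq_le_of_le {m n : ℕ} (hm : m ≠ 0) (hmn : m ≤ n) :
    √π / stirlingSeq m ≤ √π / stirlingSeq n := by
  obtain ⟨m, rfl⟩ := exists_eq_succ_of_ne_zero hm
  obtain ⟨n, rfl⟩ := exists_eq_succ_of_ne_zero (by omega : n ≠ 0)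
  exact div_le_div_of_nonneg_left (sqrt_nonneg π) (stirlingSeq'_pos n)
    (stirlingSeq'_antitone (succ_le_succ_iff.1 hmn))

lemma tendsto_sqrt_pi_div_stirlingSeq : Tendsto (fun n => √π / stirlingSeq n) atTop (𝓝 1) := by
  have h := (tendsto_const_nhds (x := √π)).div tendsto_stirlingSeq_sqrt_pi (sqrt_pos.2 pi_pos).ne'
  rwa [div_self (sqrt_pos.2 pi_pos).ne'] at h

end Stirling

noncomputable def poissonLocalError (lam : ℝ) (l : ℕ) : ℝ :=
  √(2 * π * lam) * (exp (-lam) * lam ^ l / l !) - exp (-((l : ℝ) - lam) ^ 2 / (2 * lam))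

lemma neg_sq_sub_div_two_mul_eq {lam : ℝ} (hlam : lam ≠ 0) (y : ℝ) :
    -(y - lam) ^ 2 / (2 * lam) = -(lam * ((y / lam - 1) ^ 2 / 2)) := by
  field_simp

lemma exp_neg_mul_klFun_div {lam : ℝ} (hlam : 0 < lam) (l : ℕ) :
    exp (-(lam * klFun (l / lam))) = exp (-lam) * lam ^ l / (l / exp 1) ^ l := by
  rcases eq_or_ne l 0 with rfl | hl
  · simp [klFun_zero]
  have hl' : (0 : ℝ) < l := by positivity
  rw [mul_div_assoc, ← rpow_natCast, ← rpow_natCast, rpow_def_of_pos hlam,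
    rpow_def_of_pos (by positivity), ← exp_sub, ← exp_add, log_div hl'.ne' (exp_pos 1).ne',
    log_exp, klFun_apply, log_div hl'.ne' hlam.ne']
  congr 1
  field_simp
  ring

lemma poisson_le_exp_neg_mul_klFun {lam : ℝ} (hlam : 0 < lam) (l : ℕ) :
    exp (-lam) * lam ^ l / l ! ≤ exp (-(lam * klFun (l / lam))) := by
  rcases eq_or_ne l 0 with rfl | hl
  · simp [klFun_zero]
  rw [exp_neg_mul_klFun_div hlam]
  gcongr
  rw [div_pow, div_le_iff₀ (by positivity), ← div_le_iff₀' (by positivity), ← exp_nat_mul,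
    mul_one]
  exact pow_div_factorial_le_exp _ (by positivity) l

lemma sqrt_two_pi_mul_poisson_eq {lam : ℝ} (hlam : 0 < lam) {l : ℕ} (hl : l ≠ 0) :
    √(2 * π * lam) * (exp (-lam) * lam ^ l / l !) =
      √π / Stirling.stirlingSeq l * √(lam / l) * exp (-(lam * klFun (l / lam))) := by
  have hl' : (0 : ℝ) < l := by positivity
  rw [exp_neg_mul_klFun_div hlam, Stirling.stirlingSeq]
  have h2l : √(2 * π * lam) = √(2 * l) * (√π * √(lam / l)) := by
    rw [← sqrt_mul (by positivity), ← sqrt_mul (by positivity)]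
    congr 1; field_simp
  rw [h2l]
  field_simp

lemma abs_poissonLocalError_le_of_abs_sub_one_le {lam τ : ℝ} (hlam : 0 < lam) (hτ : τ ≤ 1 / 2)
    {l : ℕ} (hl : |l / lam - 1| ≤ τ) :
    |poissonLocalError lam l| ≤
      2 * (1 - √π / Stirling.stirlingSeq l) + 2 * τ + 4 * lam * τ ^ 3 := by
  set x : ℝ := l / lam with hx
  have hx1 : |x - 1| ≤ 1 / 2 := hl.trans hτ
  have hl0 : l ≠ 0 := by
    rintro rfl
    norm_num [hx] at hx1
  rw [poissonLocalError, sqrt_two_pi_mul_poisson_eq hlam hl0,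
    neg_sq_sub_div_two_mul_eq hlam.ne', ← hx, show lam / l = x⁻¹ by rw [hx, inv_div]]
  set A := √π / Stirling.stirlingSeq l
  set B := √x⁻¹
  set E := exp (-(lam * klFun x))
  set G := exp (-(lam * ((x - 1) ^ 2 / 2)))
  have hA0 : 0 ≤ A := div_nonneg (sqrt_nonneg π)
    ((sqrt_nonneg π).trans (Stirling.sqrt_pi_le_stirlingSeq hl0))
  have hA1 : A ≤ 1 := Stirling.sqrt_pi_div_stirlingSeq_le_one hl0
  have hB : |B - 1| ≤ 2 * τ := (abs_sqrt_inv_sub_one_le hx1).trans (by linarith)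
  have hB2 : B ≤ 2 := by linarith [(abs_le.1 hB).2]
  have hK : 0 ≤ lam * klFun x :=
    mul_nonneg hlam.le (klFun_nonneg (by linarith [(abs_le.1 hx1).1]))
  have hE0 : 0 ≤ E := (exp_pos _).le
  have hE1 : E ≤ 1 := exp_le_one_iff.2 (neg_nonpos.2 hK)
  have hEG : |E - G| ≤ 4 * lam * τ ^ 3 := by
    refine (abs_exp_neg_sub_exp_neg_le hK (by positivity)).trans ?_
    rw [← mul_sub, abs_mul, abs_of_pos hlam]
    calc lam * |klFun x - (x - 1) ^ 2 / 2| ≤ lam * (4 * |x - 1| ^ 3) :=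
          mul_le_mul_of_nonneg_left (abs_klFun_sub_sq_le hx1) hlam.le
      _ ≤ 4 * lam * τ ^ 3 := by rw [← mul_assoc, mul_comm lam]; gcongr
  calc |A * B * E - G| = |(A - 1) * B * E + (B - 1) * E + (E - G)| := by ring_nf
    _ ≤ (1 - A) * 2 * 1 + 2 * τ * 1 + 4 * lam * τ ^ 3 := by
        refine (abs_add_three _ _ _).trans (add_le_add (add_le_add ?_ ?_) hEG)
        · rw [abs_mul, abs_mul, abs_of_nonpos (by linarith : A - 1 ≤ 0), abs_of_nonneg hE0,
            abs_of_nonneg (by linarith [(abs_le.1 hB).1] : 0 ≤ B)]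
          gcongr; linarith
        · rw [abs_mul, abs_of_nonneg hE0]
          exact mul_le_mul hB hE1 hE0 (by linarith [abs_nonneg (B - 1)])
    _ = 2 * (1 - A) + 2 * τ + 4 * lam * τ ^ 3 := by ring

lemma abs_poissonLocalError_le_of_le_abs_sub_one {lam τ : ℝ} (hlam : 1 ≤ lam) (hτ0 : 0 < τ)
    (hτ : τ ≤ 1 / 16) {l : ℕ} (hl : τ ≤ |l / lam - 1|) :
    |poissonLocalError lam l| ≤ 4 * (√lam * exp (-(lam * τ ^ 2 / 4))) := by
  have hlam0 : 0 < lam := by linarith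
  have hsqrt : 1 ≤ √lam := one_le_sqrt.2 hlam
  have hP : √(2 * π * lam) * (exp (-lam) * lam ^ l / l !) ≤
      3 * (√lam * exp (-(lam * τ ^ 2 / 4))) := by
    rw [sqrt_mul (by positivity), mul_assoc]
    gcongr
    · exact sqrt_le_iff.2 ⟨by norm_num, by nlinarith [pi_le_four]⟩
    · refine (poisson_le_exp_neg_mul_klFun hlam0 l).trans (exp_le_exp.2 (neg_le_neg ?_))
      rw [mul_div_assoc]
      exact mul_le_mul_of_nonneg_left (sq_div_four_le_klFun hτ0 hτ (by positivity) hl) hlam0.le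
  have hG : exp (-((l : ℝ) - lam) ^ 2 / (2 * lam)) ≤ √lam * exp (-(lam * τ ^ 2 / 4)) := by
    rw [neg_sq_sub_div_two_mul_eq hlam0.ne']
    have hsq : τ ^ 2 ≤ (l / lam - 1) ^ 2 := by
      rw [← sq_abs (l / lam - 1)]; exact pow_le_pow_left₀ hτ0.le hl 2
    calc _ ≤ 1 * exp (-(lam * τ ^ 2 / 4)) := by
          rw [one_mul]; exact exp_le_exp.2 (by nlinarith [sq_nonneg τ])
      _ ≤ _ := by gcongr
  rw [poissonLocalError]
  refine (abs_sub _ _).trans ?_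
  rw [abs_of_nonneg (by positivity), abs_of_nonneg (exp_pos _).le]
  linarith

/-- Points with `|l / λ - 1| ≤ τ ≤ 1 / 2` have `l ≥ λ / 2`, and `√π / s_l` increases with `l`;
hence the single Stirling term at `⌈λ / 2⌉`. -/
noncomputable def poissonLocalErrorBound (lam τ : ℝ) : ℝ :=
  2 * (1 - √π / Stirling.stirlingSeq ⌈lam / 2⌉₊) + 2 * τ + 4 * (lam * τ ^ 3)
    + 4 * (√lam * exp (-(lam * τ ^ 2 / 4)))

lemma abs_poissonLocalError_le {lam τ : ℝ} (hlam : 1 ≤ lam) (hτ0 : 0 < τ) (hτ : τ ≤ 1 / 16)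
    (l : ℕ) : |poissonLocalError lam l| ≤ poissonLocalErrorBound lam τ := by
  have hlam0 : 0 < lam := by linarith
  have hn : ⌈lam / 2⌉₊ ≠ 0 := (Nat.ceil_pos.2 (by positivity)).ne'
  have hcentral : 0 ≤ 1 - √π / Stirling.stirlingSeq ⌈lam / 2⌉₊ :=
    sub_nonneg.2 (Stirling.sqrt_pi_div_stirlingSeq_le_one hn)
  have htail : 0 ≤ √lam * exp (-(lam * τ ^ 2 / 4)) := by positivity
  rw [poissonLocalErrorBound]
  rcases le_or_gt |(l : ℝ) / lam - 1| τ with hl | hl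
  · have hhalf : lam / 2 ≤ l := by
      have h := (abs_le.1 hl).1
      rw [le_sub_iff_add_le, le_div_iff₀ hlam0] at h
      nlinarith
    have hl' := abs_poissonLocalError_le_of_abs_sub_one_le hlam0 (by linarith) hl
    have hmono := Stirling.sqrt_pi_div_stirlingSeq_le_of_le hn (Nat.ceil_le.2 hhalf)
    linarith
  · have hl' := abs_poissonLocalError_le_of_le_abs_sub_one hlam hτ0 hτ hl.le
    have : 0 ≤ lam * τ ^ 3 := by positivity
    linarith

/-- The window `|l / λ - 1| ≤ λ^{-2/5}` is wide enough for `λ τ² = λ^{1/5}` to beat `√λ` in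
the tail, and narrow enough for the cubic error `λ τ³ = λ^{-1/5}` to vanish. -/
lemma tendsto_poissonLocalErrorBound :
    Tendsto (fun lam : ℝ => poissonLocalErrorBound lam (lam ^ (-(2 / 5) : ℝ))) atTop (𝓝 0) := by
  have hτ : Tendsto (fun lam : ℝ => lam ^ (-(2 / 5) : ℝ)) atTop (𝓝 0) :=
    tendsto_rpow_neg_atTop (by norm_num)
  have hstirling :
      Tendsto (fun lam : ℝ => 1 - √π / Stirling.stirlingSeq ⌈lam / 2⌉₊) atTop (𝓝 0) := by
    have h := (tendsto_const_nhds (x := (1 : ℝ))).sub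
      (Stirling.tendsto_sqrt_pi_div_stirlingSeq.comp
        (tendsto_nat_ceil_atTop.comp (tendsto_id.atTop_div_const (by norm_num : (0 : ℝ) < 2))))
    rwa [sub_self] at h
  have hcube : Tendsto (fun lam : ℝ => lam * (lam ^ (-(2 / 5) : ℝ)) ^ 3) atTop (𝓝 0) := by
    refine (tendsto_rpow_neg_atTop (by norm_num : (0 : ℝ) < 1 / 5)).congr' ?_
    filter_upwards [eventually_gt_atTop 0] with lam hlam
    rw [← rpow_natCast, ← rpow_mul hlam.le, ← rpow_one_add' hlam.le (by norm_num)]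
    norm_num
  have hgauss : Tendsto (fun lam : ℝ => √lam * exp (-(lam * (lam ^ (-(2 / 5) : ℝ)) ^ 2 / 4)))
      atTop (𝓝 0) := by
    refine (tendsto_rpow_mul_exp_neg_mul_rpow_atTop_nhds_zero (1 / 2)
      (by norm_num : (0 : ℝ) < 1 / 4) (by norm_num : (0 : ℝ) < 1 / 5)).congr' ?_
    filter_upwards [eventually_gt_atTop 0] with lam hlam
    rw [sqrt_eq_rpow, ← rpow_natCast, ← rpow_mul hlam.le, ← rpow_one_add' hlam.le (by norm_num)]
    congr 2
    norm_num
    ring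
  simpa [poissonLocalErrorBound] using
    (((hstirling.const_mul 2).add (hτ.const_mul 2)).add (hcube.const_mul 4)).add
      (hgauss.const_mul 4)

/-- Local limit theorem for the Poisson distribution:
`sup_l |√(2πλ) P(X_λ = l) − exp(−(l−λ)²/(2λ))| → 0` as `λ → ∞`. -/
theorem poisson_local_limit :
    Filter.Tendsto
      (fun lam : ℝ =>
        ⨆ l : ℕ,
          |Real.sqrt (2 * Real.pi * lam)
              * (Real.exp (-lam) * lam ^ l / (l.factorial : ℝ))
            - Real.exp (-((l : ℝ) - lam) ^ 2 / (2 * lam))|)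
      atTop (nhds 0) := by
  have hτ : ∀ᶠ lam : ℝ in atTop, lam ^ (-(2 / 5) : ℝ) ≤ 1 / 16 :=
    (tendsto_rpow_neg_atTop (by norm_num)).eventually (ge_mem_nhds (by norm_num))
  refine squeeze_zero' (Eventually.of_forall fun lam => iSup_nonneg fun l => abs_nonneg _)
    ?_ tendsto_poissonLocalErrorBound
  filter_upwards [eventually_ge_atTop 1, hτ] with lam hlam hτ16
  exact ciSup_le (abs_poissonLocalError_le hlam (rpow_pos_of_pos (by linarith) _) hτ16)
end

section
/- Let f(z) = 1 − b E[z^Z] + (log z)·b E[Z z^Z] with Z ≥ 0 bounded, integer-valued, P(Z ≥ 1) > 0, b ≥ 2, and p₀ = P(Z = 0). Then lim_{z↓0} f(z) = 1 − b p₀ and lim_{z→∞} f(z) = ∞; consequently f has exactly one root in (0,∞) if p₀ > 1/b and exactly two roots if p₀ < 1/b. -/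
/-!
With `p_l = P(Z = l)`, `f(z) = 1 + b ∑ p_l (l log z - 1) z^l`. The `l`-th summand has derivative
`p_l l² log z · z^(l-1)`, so `f` strictly decreases on `(0, 1]` and strictly increases on `[1, ∞)`,
with `f 1 = 1 - b < 0`. As `z ↓ 0` only the `l = 0` summand `-p₀` survives; as `z → ∞` a summand
with `l ≥ 1`, `p_l > 0` tends to `∞` while every other one stays `≥ -p_l`. Hence `f` has exactly
one zero in `(1, ∞)`, and one in `(0, 1)` exactly when `1 - b p₀ > 0`.
-/

open MeasureTheory Filter Real Set Topology

structure IsValley (F : ℝ → ℝ) (L : ℝ) : Prop where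
  continuousOn : ContinuousOn F (Ioi 0)
  strictAntiOn : StrictAntiOn F (Ioc 0 1)
  strictMonoOn : StrictMonoOn F (Ici 1)
  apply_one_neg : F 1 < 0
  tendsto_nhdsGT_zero : Tendsto F (𝓝[>] 0) (𝓝 L)
  tendsto_atTop : Tendsto F atTop atTop

namespace IsValley

variable {F : ℝ → ℝ} {L : ℝ}

theorem exists_zero_gt_one (hF : IsValley F L) :
    ∃ z₁, 1 < z₁ ∧ ∀ z, 1 ≤ z → (F z = 0 ↔ z = z₁) := by
  obtain ⟨c, hc, hc1⟩ :=
    ((hF.tendsto_atTop.eventually_gt_atTop 0).and (eventually_ge_atTop 1)).exists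
  obtain ⟨z₁, hz₁, hFz₁⟩ := intermediate_value_Icc hc1
    (hF.continuousOn.mono fun _ hz => mem_Ioi.2 (zero_lt_one.trans_le hz.1))
    ⟨hF.apply_one_neg.le, hc.le⟩
  have hz₁1 : 1 < z₁ := hz₁.1.lt_of_ne fun h => hF.apply_one_neg.ne (h ▸ hFz₁)
  refine ⟨z₁, hz₁1, fun z hz => ⟨fun hFz => ?_, fun h => h ▸ hFz₁⟩⟩
  exact hF.strictMonoOn.injOn hz (mem_Ici.2 hz₁1.le) (hFz.trans hFz₁.symm)

theorem lt_of_mem_Ioc (hF : IsValley F L) {z : ℝ} (hz : z ∈ Ioc 0 1) : F z < L := by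
  have hz2 : z / 2 ∈ Ioc 0 1 := ⟨half_pos hz.1, (half_lt_self hz.1).le.trans hz.2⟩
  refine (hF.strictAntiOn hz2 hz (half_lt_self hz.1)).trans_le ?_
  refine ge_of_tendsto hF.tendsto_nhdsGT_zero ?_
  filter_upwards [Ioo_mem_nhdsGT hz2.1] with w hw
  exact (hF.strictAntiOn ⟨hw.1, hw.2.le.trans hz2.2⟩ hz2 hw.2).le

theorem exists_zero_lt_one (hF : IsValley F L) (hL : 0 < L) :
    ∃ z₀, 0 < z₀ ∧ z₀ < 1 ∧ ∀ z ∈ Ioc 0 1, (F z = 0 ↔ z = z₀) := by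
  obtain ⟨a, haF, ha⟩ := ((hF.tendsto_nhdsGT_zero.eventually (eventually_gt_nhds hL)).and
    (Ioo_mem_nhdsGT zero_lt_one)).exists
  obtain ⟨z₀, hz₀, hFz₀⟩ := intermediate_value_Icc' ha.2.le
    (hF.continuousOn.mono fun _ hz => mem_Ioi.2 (ha.1.trans_le hz.1))
    ⟨hF.apply_one_neg.le, haF.le⟩
  have hz₀1 : z₀ < 1 := hz₀.2.lt_of_ne fun h => hF.apply_one_neg.ne (h ▸ hFz₀)
  have hz₀0 : 0 < z₀ := ha.1.trans_le hz₀.1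
  refine ⟨z₀, hz₀0, hz₀1, fun z hz => ⟨fun hFz => ?_, fun h => h ▸ hFz₀⟩⟩
  exact hF.strictAntiOn.injOn hz ⟨hz₀0, hz₀1.le⟩ (hFz.trans hFz₀.symm)

theorem setOf_zero_eq_singleton (hF : IsValley F L) (hL : L ≤ 0) :
    ∃ z₁, {z | 0 < z ∧ F z = 0} = {z₁} := by
  obtain ⟨z₁, hz₁1, hz₁⟩ := hF.exists_zero_gt_one
  refine ⟨z₁, Set.ext fun z => ⟨fun ⟨hz0, hFz⟩ => ?_, fun h => ?_⟩⟩
  · rcases le_or_gt z 1 with hz1 | hz1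
    · exact absurd hFz ((hF.lt_of_mem_Ioc ⟨hz0, hz1⟩).trans_le hL).ne
    · exact (hz₁ z hz1.le).1 hFz
  · rw [mem_singleton_iff.1 h]
    exact ⟨zero_lt_one.trans hz₁1, (hz₁ z₁ hz₁1.le).2 rfl⟩

theorem setOf_zero_eq_pair (hF : IsValley F L) (hL : 0 < L) :
    ∃ z₀ z₁, 0 < z₀ ∧ z₀ < z₁ ∧ {z | 0 < z ∧ F z = 0} = {z₀, z₁} := by
  obtain ⟨z₀, hz₀0, hz₀1, hz₀⟩ := hF.exists_zero_lt_one hL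
  obtain ⟨z₁, hz₁1, hz₁⟩ := hF.exists_zero_gt_one
  refine ⟨z₀, z₁, hz₀0, hz₀1.trans hz₁1, Set.ext fun z => ⟨fun ⟨hz0, hFz⟩ => ?_, ?_⟩⟩
  · rcases le_or_gt z 1 with hz1 | hz1
    · exact Or.inl ((hz₀ z ⟨hz0, hz1⟩).1 hFz)
    · exact Or.inr ((hz₁ z hz1.le).1 hFz)
  · rintro (rfl | rfl)
    · exact ⟨hz₀0, (hz₀ z ⟨hz₀0, hz₀1.le⟩).2 rfl⟩
    · exact ⟨zero_lt_one.trans hz₁1, (hz₁ z hz₁1.le).2 rfl⟩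

end IsValley

noncomputable def logPowTerm (n : ℕ) (z : ℝ) : ℝ := (n * log z - 1) * z ^ n

theorem hasDerivAt_logPowTerm (n : ℕ) {z : ℝ} (hz : 0 < z) :
    HasDerivAt (logPowTerm n) (n ^ 2 * log z * z ^ (n - 1)) z := by
  have h : HasDerivAt (logPowTerm n)
      (n * z⁻¹ * z ^ n + (n * log z - 1) * (n * z ^ (n - 1))) z :=
    (((hasDerivAt_log hz.ne').const_mul (n : ℝ)).sub_const 1).mul (hasDerivAt_pow n z)
  refine h.congr_deriv ?_
  rcases n with _ | k
  · simp
  · simp only [Nat.add_sub_cancel]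
    field_simp
    ring

theorem neg_one_le_logPowTerm (n : ℕ) {z : ℝ} (hz : 0 < z) : -1 ≤ logPowTerm n z := by
  have hzn : 0 < z ^ n := pow_pos hz n
  have hlog : 1 - (z ^ n)⁻¹ ≤ n * log z := by
    simpa only [log_pow] using one_sub_inv_le_log_of_pos hzn
  calc (-1 : ℝ) = (1 - (z ^ n)⁻¹ - 1) * z ^ n := by field_simp; ring
    _ ≤ logPowTerm n z := mul_le_mul_of_nonneg_right (by linarith) hzn.le

theorem tendsto_logPowTerm_atTop {n : ℕ} (hn : n ≠ 0) : Tendsto (logPowTerm n) atTop atTop := by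
  have hlog : Tendsto (fun z => n * log z - 1) atTop atTop :=
    tendsto_atTop_add_const_right _ _
      (tendsto_log_atTop.const_mul_atTop (by positivity : (0 : ℝ) < n))
  exact hlog.atTop_mul_atTop₀ (tendsto_pow_atTop hn)

theorem tendsto_logPowTerm_nhdsGT_zero (n : ℕ) :
    Tendsto (logPowTerm n) (𝓝[>] 0) (𝓝 (-0 ^ n)) := by
  rcases Nat.eq_zero_or_pos n with rfl | hn
  · have hconst : logPowTerm 0 = fun _ => -1 := by funext; simp [logPowTerm]
    simp [hconst]
  have hlog : Tendsto (fun z : ℝ => log z * z ^ n) (𝓝[>] 0) (𝓝 0) := by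
    simpa only [rpow_natCast] using tendsto_log_mul_rpow_nhdsGT_zero (r := n) (by positivity)
  have hpow : Tendsto (fun z : ℝ => z ^ n) (𝓝[>] 0) (𝓝 (0 ^ n)) :=
    ((continuous_pow n).tendsto 0).mono_left nhdsWithin_le_nhds
  convert (hlog.const_mul (n : ℝ)).sub hpow using 2 with z
  · simp only [logPowTerm]; ring
  · simp

/-- `f` in the form `1 + b E[(Z log z - 1) z^Z]`, for the law `p` of `Z` supported in `S`. -/
noncomputable def rootFun (S : Finset ℕ) (p : ℕ → ℝ) (b z : ℝ) : ℝ :=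
  1 + b * ∑ l ∈ S, p l * logPowTerm l z

section rootFun

variable {S : Finset ℕ} {p : ℕ → ℝ} {b : ℝ}

theorem rootFun_eq (z : ℝ) : rootFun S p b z =
    1 - b * ∑ l ∈ S, z ^ l * p l + log z * (b * ∑ l ∈ S, (l : ℝ) * z ^ l * p l) := by
  have hsum : ∑ l ∈ S, p l * logPowTerm l z =
      log z * ∑ l ∈ S, (l : ℝ) * z ^ l * p l - ∑ l ∈ S, z ^ l * p l := by
    rw [Finset.mul_sum, ← Finset.sum_sub_distrib]
    exact Finset.sum_congr rfl fun l _ => by simp only [logPowTerm]; ring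
  rw [rootFun, hsum]
  ring

theorem rootFun_one : rootFun S p b 1 = 1 - b * ∑ l ∈ S, p l := by
  simp [rootFun, logPowTerm, sub_eq_add_neg]

theorem hasDerivAt_rootFun {z : ℝ} (hz : 0 < z) :
    HasDerivAt (rootFun S p b) (log z * (b * ∑ l ∈ S, p l * (l ^ 2 * z ^ (l - 1)))) z := by
  have h : HasDerivAt (rootFun S p b) (b * ∑ l ∈ S, p l * (l ^ 2 * log z * z ^ (l - 1))) z :=
    ((HasDerivAt.fun_sum fun l _ => (hasDerivAt_logPowTerm l hz).const_mul (p l)).const_mul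
      b).const_add 1
  refine h.congr_deriv ?_
  simp only [Finset.mul_sum]
  exact Finset.sum_congr rfl fun l _ => by ring

theorem continuousOn_rootFun : ContinuousOn (rootFun S p b) (Ioi 0) :=
  fun _ hz => (hasDerivAt_rootFun hz).continuousAt.continuousWithinAt

theorem tendsto_rootFun_nhdsGT_zero (h0 : 0 ∈ S) :
    Tendsto (rootFun S p b) (𝓝[>] 0) (𝓝 (1 - b * p 0)) := by
  have h := ((tendsto_finsetSum S fun l _ =>
    (tendsto_logPowTerm_nhdsGT_zero l).const_mul (p l)).const_mul b).const_add 1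
  have hval : ∑ l ∈ S, p l * -(0 : ℝ) ^ l = -p 0 := by
    rw [Finset.sum_eq_single_of_mem 0 h0 fun l _ hl => by simp [hl]]
    simp
  rw [hval, mul_neg, ← sub_eq_add_neg] at h
  exact h

variable (hp : ∀ l ∈ S, 0 ≤ p l) (hpos : ∃ l ∈ S, l ≠ 0 ∧ 0 < p l) (hb : 0 < b)
include hp hpos

theorem sum_mul_sq_mul_pow_pos {z : ℝ} (hz : 0 < z) :
    0 < ∑ l ∈ S, p l * (l ^ 2 * z ^ (l - 1)) := by
  obtain ⟨l₀, hl₀, hl₀0, hpl₀⟩ := hpos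
  refine Finset.sum_pos' (fun l hl => by have := hp l hl; positivity) ⟨l₀, hl₀, ?_⟩
  have : (0 : ℝ) < l₀ := by exact_mod_cast Nat.pos_of_ne_zero hl₀0
  positivity

include hb

theorem strictAntiOn_rootFun : StrictAntiOn (rootFun S p b) (Ioc 0 1) := by
  refine strictAntiOn_of_deriv_neg (convex_Ioc 0 1) (continuousOn_rootFun.mono Ioc_subset_Ioi_self)
    fun z hz => ?_
  rw [interior_Ioc] at hz
  rw [(hasDerivAt_rootFun hz.1).deriv]
  exact mul_neg_of_neg_of_pos (log_neg hz.1 hz.2) (mul_pos hb (sum_mul_sq_mul_pow_pos hp hpos hz.1))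

theorem strictMonoOn_rootFun : StrictMonoOn (rootFun S p b) (Ici 1) := by
  refine strictMonoOn_of_deriv_pos (convex_Ici 1)
    (continuousOn_rootFun.mono fun _ hz => mem_Ioi.2 (zero_lt_one.trans_le hz)) fun z hz => ?_
  rw [interior_Ici] at hz
  have hz0 : 0 < z := zero_lt_one.trans hz
  rw [(hasDerivAt_rootFun hz0).deriv]
  exact mul_pos (log_pos hz) (mul_pos hb (sum_mul_sq_mul_pow_pos hp hpos hz0))

theorem tendsto_rootFun_atTop : Tendsto (rootFun S p b) atTop atTop := by
  obtain ⟨l₀, hl₀, hl₀0, hpl₀⟩ := hpos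
  set c := ∑ l ∈ S.erase l₀, p l
  have hlower : ∀ z, 0 < z → 1 + b * (p l₀ * logPowTerm l₀ z - c) ≤ rootFun S p b z := by
    intro z hz
    have hrest : -c ≤ ∑ l ∈ S.erase l₀, p l * logPowTerm l z := by
      rw [← neg_one_mul, Finset.mul_sum]
      refine Finset.sum_le_sum fun l hl => ?_
      have := mul_le_mul_of_nonneg_left (neg_one_le_logPowTerm l hz)
        (hp l (Finset.mem_of_mem_erase hl))
      linarith
    rw [rootFun, ← Finset.add_sum_erase S _ hl₀]
    gcongr
    linarith
  refine tendsto_atTop_mono' _ ((eventually_gt_atTop 0).mono hlower) ?_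
  refine tendsto_atTop_add_const_left _ 1 (Tendsto.const_mul_atTop hb ?_)
  exact tendsto_atTop_add_const_right _ _ ((tendsto_logPowTerm_atTop hl₀0).const_mul_atTop hpl₀)

end rootFun

theorem isValley_rootFun {S : Finset ℕ} {p : ℕ → ℝ} {b : ℝ} (hp : ∀ l ∈ S, 0 ≤ p l)
    (hpos : ∃ l ∈ S, l ≠ 0 ∧ 0 < p l) (hb : 0 < b) (h0 : 0 ∈ S) (hb1 : 1 < b * ∑ l ∈ S, p l) :
    IsValley (rootFun S p b) (1 - b * p 0) where
  continuousOn := continuousOn_rootFun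
  strictAntiOn := strictAntiOn_rootFun hp hpos hb
  strictMonoOn := strictMonoOn_rootFun hp hpos hb
  apply_one_neg := by rw [rootFun_one]; linarith
  tendsto_nhdsGT_zero := tendsto_rootFun_nhdsGT_zero h0
  tendsto_atTop := tendsto_rootFun_atTop hp hpos hb

section BoundedNatValued

variable {Ω : Type*} [MeasurableSpace Ω] {P : Measure Ω} {Z : Ω → ℕ} {M : ℕ}

theorem integral_comp_eq_sum_range [IsFiniteMeasure P] (hZ : Measurable Z) (hM : ∀ ω, Z ω ≤ M)
    (g : ℕ → ℝ) :
    ∫ ω, g (Z ω) ∂P = ∑ l ∈ Finset.range (M + 1), g l * P.real {ω | Z ω = l} := by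
  have hmeas (l : ℕ) : MeasurableSet {ω | Z ω = l} := hZ (measurableSet_singleton l)
  have hsplit (ω : Ω) : g (Z ω) =
      ∑ l ∈ Finset.range (M + 1), {ω' | Z ω' = l}.indicator (fun _ => g l) ω := by
    simp only [indicator_apply, mem_ofPred_eq]
    rw [Finset.sum_ite_eq, if_pos (Finset.mem_range_succ_iff.2 (hM ω))]
  simp only [hsplit]
  rw [integral_finsetSum _ fun l _ => (integrable_const (g l)).indicator (hmeas l)]
  refine Finset.sum_congr rfl fun l _ => ?_
  rw [integral_indicator_const _ (hmeas l), smul_eq_mul, mul_comm]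

theorem exists_ne_zero_measureReal_pos [IsFiniteMeasure P] (hM : ∀ ω, Z ω ≤ M)
    (hZpos : 0 < P {ω | 1 ≤ Z ω}) :
    ∃ l ∈ Finset.range (M + 1), l ≠ 0 ∧ 0 < P.real {ω | Z ω = l} := by
  by_contra! h
  refine hZpos.ne' (measure_mono_null (t := ⋃ l ∈ {l | l ≠ 0 ∧ l ≤ M}, {ω | Z ω = l}) ?_ ?_)
  · intro ω hω
    simp only [mem_iUnion, mem_ofPred_eq, exists_prop]
    exact ⟨Z ω, ⟨Nat.one_le_iff_ne_zero.1 hω, hM ω⟩, rfl⟩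
  · refine (measure_biUnion_null_iff (Set.to_countable _)).2 fun l ⟨hl0, hlM⟩ => ?_
    exact (measureReal_eq_zero_iff).1
      ((h l (Finset.mem_range_succ_iff.2 hlM) hl0).antisymm measureReal_nonneg)

end BoundedNatValued

/-- For `f(z) = 1 − b E[z^Z] + (log z) b E[Z z^Z]`:
`lim_{z↓0} f(z) = 1 − b p₀`, `lim_{z→∞} f(z) = ∞`; `f` has exactly one positive root
when `p₀ > 1/b` and exactly two positive roots when `p₀ < 1/b`. -/
theorem f_limits_and_roots
    {Ω : Type*} [MeasurableSpace Ω] (P : Measure Ω) [IsProbabilityMeasure P]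
    (b : ℕ) (hb : 2 ≤ b) (Z : Ω → ℕ) (hZmeas : Measurable Z)
    (hZbd : ∃ M : ℕ, ∀ ω, Z ω ≤ M)
    (hZpos : 0 < P {ω | 1 ≤ Z ω})
    (p₀ : ℝ) (hp₀ : p₀ = (P {ω | Z ω = 0}).toReal)
    (f : ℝ → ℝ)
    (hf : ∀ z : ℝ, f z = 1 - (b : ℝ) * (∫ ω, z ^ Z ω ∂P)
        + Real.log z * ((b : ℝ) * ∫ ω, (Z ω : ℝ) * z ^ Z ω ∂P)) :
    Filter.Tendsto f (nhdsWithin 0 (Set.Ioi 0)) (nhds (1 - (b : ℝ) * p₀)) ∧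
    Filter.Tendsto f atTop atTop ∧
    (1 / (b : ℝ) < p₀ → ∃! z : ℝ, 0 < z ∧ f z = 0) ∧
    (p₀ < 1 / (b : ℝ) → ∃ z₀ z₁ : ℝ, 0 < z₀ ∧ z₀ < z₁ ∧
      {z : ℝ | 0 < z ∧ f z = 0} = {z₀, z₁}) := by
  obtain ⟨M, hM⟩ := hZbd
  set p : ℕ → ℝ := fun l => P.real {ω | Z ω = l}
  have hb0 : (0 : ℝ) < b := by positivity
  have hfp : f = rootFun (Finset.range (M + 1)) p b := funext fun z => by
    rw [hf, rootFun_eq, integral_comp_eq_sum_range hZmeas hM (fun n => z ^ n),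
      integral_comp_eq_sum_range hZmeas hM (fun n => (n : ℝ) * z ^ n)]
  have hsum : ∑ l ∈ Finset.range (M + 1), p l = 1 := by
    simpa using (integral_comp_eq_sum_range (P := P) hZmeas hM fun _ => 1).symm
  have hV : IsValley f (1 - b * p₀) := by
    rw [hfp, hp₀]
    refine isValley_rootFun (fun _ _ => measureReal_nonneg)
      (exists_ne_zero_measureReal_pos hM hZpos) hb0 (by simp) ?_
    rw [hsum, mul_one]
    exact_mod_cast hb
  refine ⟨hV.tendsto_nhdsGT_zero, hV.tendsto_atTop, fun hp₀b => ?_, fun hp₀b => ?_⟩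
  · obtain ⟨z₁, hz₁⟩ := hV.setOf_zero_eq_singleton (by rw [div_lt_iff₀ hb0] at hp₀b; linarith)
    exact ⟨z₁, (Set.ext_iff.1 hz₁ z₁).2 rfl, fun z hz => (Set.ext_iff.1 hz₁ z).1 hz⟩
  · exact hV.setOf_zero_eq_pair (by rw [lt_div_iff₀ hb0] at hp₀b; linarith)
end

section
/- Let g(z) = 1 − (z + 1/z) + (log z)(z − 1/z) for z > 0. Then g has a unique critical point at z = 1 with g(1) = −1, lim_{z↓0} g(z) = ∞ and lim_{z→∞} g(z) = ∞, and g has exactly two roots 0 < z₀ < 1 < z₁ on (0,∞), with g < 0 exactly on (z₀, z₁). -/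
/-!
Since `g'(z) = log z · (1 + 1/z²)`, the function `g` decreases strictly on `(0, 1]` and increases
strictly on `[1, ∞)`, with minimum `g 1 = -1 < 0`. Both ends tend to `+∞` (near `0` the term
`-(log z + 1)/z` dominates, near `∞` the term `z (log z - 1)`), so the intermediate value theorem
gives one root on each side of `1`, and strict monotonicity makes each root unique and fixes the
sign of `g` everywhere.
-/

open Filter Real Set Topology

theorem exists_two_zeros_of_strictAntiOn_of_strictMonoOn {f : ℝ → ℝ} {a c : ℝ} (hac : a < c)
    (hf : ContinuousOn f (Ioi a)) (h_anti : StrictAntiOn f (Ioc a c))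
    (h_mono : StrictMonoOn f (Ici c)) (hc : f c < 0)
    (h_left : Tendsto f (𝓝[>] a) atTop) (h_right : Tendsto f atTop atTop) :
    ∃ z₀ z₁ : ℝ, a < z₀ ∧ z₀ < c ∧ c < z₁ ∧
      {z : ℝ | a < z ∧ f z = 0} = {z₀, z₁} ∧
      (∀ z : ℝ, a < z → (f z < 0 ↔ z ∈ Ioo z₀ z₁)) := by
  obtain ⟨z₀, hz₀, hfz₀⟩ : (0 : ℝ) ∈ f '' Ioc a c :=
    isPreconnected_Ioc.intermediate_value_Ici (right_mem_Ioc.2 hac)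
      (le_principal_iff.2 (Ioc_mem_nhdsGT hac)) (hf.mono Ioc_subset_Ioi_self) h_left hc.le
  obtain ⟨z₁, hz₁, hfz₁⟩ : (0 : ℝ) ∈ f '' Ici c :=
    isPreconnected_Ici.intermediate_value_Ici self_mem_Ici
      (le_principal_iff.2 (Ici_mem_atTop c)) (hf.mono (Ici_subset_Ioi.2 hac)) h_right hc.le
  have hz₀c : z₀ < c := hz₀.2.lt_of_ne (by rintro rfl; linarith)
  have hcz₁ : c < z₁ := lt_of_le_of_ne hz₁ (by rintro rfl; linarith)
  have sign : ∀ z, a < z → (f z < 0 ↔ z ∈ Ioo z₀ z₁) ∧ (f z = 0 ↔ z = z₀ ∨ z = z₁) := by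
    intro z hz
    rcases le_total z c with hzc | hcz
    · have hz' : z ∈ Ioc a c := ⟨hz, hzc⟩
      have hzz₁ : z < z₁ := hzc.trans_lt hcz₁
      rw [← hfz₀, h_anti.lt_iff_gt hz' hz₀, eq_comm, h_anti.eq_iff_eq hz₀ hz']
      simp [hzz₁, hzz₁.ne]
    · have hzz₀ : z₀ < z := hz₀c.trans_le hcz
      rw [← hfz₁, h_mono.lt_iff_lt hcz hz₁, h_mono.eq_iff_eq hcz hz₁]
      simp [hzz₀, hzz₀.ne']
  refine ⟨z₀, z₁, hz₀.1, hz₀c, hcz₁, ?_, fun z hz => (sign z hz).1⟩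
  ext z
  constructor
  · rintro ⟨hz, hfz⟩
    exact (sign z hz).2.1 hfz
  · rintro (rfl | rfl)
    exacts [⟨hz₀.1, hfz₀⟩, ⟨hac.trans hcz₁, hfz₁⟩]

noncomputable def exceedanceG (z : ℝ) : ℝ := 1 - (z + 1 / z) + log z * (z - 1 / z)

namespace exceedanceG

theorem hasDerivAt {z : ℝ} (hz : 0 < z) :
    HasDerivAt exceedanceG (log z * (1 + 1 / z ^ 2)) z := by
  have hz' : z ≠ 0 := hz.ne'
  have h := (((hasDerivAt_id' z).fun_add (hasDerivAt_inv hz')).const_sub 1).fun_add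
    ((hasDerivAt_log hz').fun_mul ((hasDerivAt_id' z).fun_sub (hasDerivAt_inv hz')))
  have h_eq : exceedanceG = fun x => 1 - (x + x⁻¹) + log x * (x - x⁻¹) := by
    ext x
    simp only [exceedanceG, one_div]
  rw [h_eq]
  refine h.congr_deriv ?_
  field_simp
  ring

theorem deriv_eq {z : ℝ} (hz : 0 < z) : deriv exceedanceG z = log z * (1 + 1 / z ^ 2) :=
  (hasDerivAt hz).deriv

theorem deriv_eq_zero_iff {z : ℝ} (hz : 0 < z) : deriv exceedanceG z = 0 ↔ z = 1 := by
  have hpos : 0 < 1 + 1 / z ^ 2 := by positivity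
  rw [deriv_eq hz, mul_eq_zero, or_iff_left hpos.ne']
  exact ⟨fun h => by_contra fun hne => log_ne_zero_of_pos_of_ne_one hz hne h,
    by rintro rfl; exact log_one⟩

theorem continuousOn : ContinuousOn exceedanceG (Ioi 0) :=
  fun _ hz => (hasDerivAt hz).continuousAt.continuousWithinAt

theorem apply_one : exceedanceG 1 = -1 := by norm_num [exceedanceG]

theorem strictAntiOn : StrictAntiOn exceedanceG (Ioc 0 1) := by
  refine strictAntiOn_of_deriv_neg (convex_Ioc 0 1) (continuousOn.mono Ioc_subset_Ioi_self) ?_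
  intro z hz
  rw [interior_Ioc] at hz
  rw [deriv_eq hz.1]
  exact mul_neg_of_neg_of_pos (log_neg hz.1 hz.2) (by positivity)

theorem strictMonoOn : StrictMonoOn exceedanceG (Ici 1) := by
  refine strictMonoOn_of_deriv_pos (convex_Ici 1)
    (continuousOn.mono (Ici_subset_Ioi.2 one_pos)) ?_
  intro z hz
  rw [interior_Ici] at hz
  rw [deriv_eq (one_pos.trans hz)]
  exact mul_pos (log_pos hz) (by positivity)

theorem tendsto_nhdsGT_zero : Tendsto exceedanceG (𝓝[>] 0) atTop := by
  have h_bdd : Tendsto (fun z : ℝ => 1 - z + log z * z) (𝓝[>] 0) (𝓝 (1 - 0 + 0)) := by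
    have hz : Tendsto (fun z : ℝ => z) (𝓝[>] 0) (𝓝 0) :=
      tendsto_nhdsWithin_of_tendsto_nhds tendsto_id
    have hlog : Tendsto (fun z : ℝ => log z * z) (𝓝[>] 0) (𝓝 0) := by
      simpa using tendsto_log_mul_rpow_nhdsGT_zero one_pos
    exact (tendsto_const_nhds.sub hz).add hlog
  have h_big : Tendsto (fun z : ℝ => (-log z - 1) * z⁻¹) (𝓝[>] 0) atTop :=
    (tendsto_atTop_add_const_right _ (-1)
      (tendsto_neg_atBot_atTop.comp tendsto_log_nhdsGT_zero)).atTop_mul_atTop₀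
        tendsto_inv_nhdsGT_zero
  refine (h_bdd.add_atTop h_big).congr' ?_
  filter_upwards [self_mem_nhdsWithin] with z hz
  have hz0 : z ≠ 0 := (mem_Ioi.mp hz).ne'
  simp only [exceedanceG]
  field_simp
  ring

theorem tendsto_atTop : Tendsto exceedanceG atTop atTop := by
  have h_big : Tendsto (fun z : ℝ => z * (log z - 1)) atTop atTop :=
    tendsto_id.atTop_mul_atTop₀ (tendsto_atTop_add_const_right _ (-1) tendsto_log_atTop)
  have h_bdd : Tendsto (fun z : ℝ => 1 - z⁻¹ - log z / z) atTop (𝓝 (1 - 0 - 0)) :=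
    (tendsto_const_nhds.sub tendsto_inv_atTop_zero).sub
      isLittleO_log_id_atTop.tendsto_div_nhds_zero
  refine (h_big.atTop_add h_bdd).congr' ?_
  filter_upwards [eventually_gt_atTop 0] with z hz
  have hz0 : z ≠ 0 := hz.ne'
  simp only [exceedanceG]
  field_simp
  ring

end exceedanceG

/-- Properties of `g(z) = 1 − (z + 1/z) + (log z)(z − 1/z)` on `(0,∞)`:
unique critical point at `z = 1` with `g(1) = −1`, `g → ∞` at both ends of `(0,∞)`,
and exactly two roots `0 < z₀ < 1 < z₁` with `g < 0` exactly on `(z₀, z₁)`. -/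
theorem exceedance_g_properties
    (g : ℝ → ℝ)
    (hg : ∀ z : ℝ, g z = 1 - (z + 1 / z) + Real.log z * (z - 1 / z)) :
    g 1 = -1 ∧
    (∀ z : ℝ, 0 < z → (deriv g z = 0 ↔ z = 1)) ∧
    Filter.Tendsto g (nhdsWithin 0 (Set.Ioi 0)) atTop ∧
    Filter.Tendsto g atTop atTop ∧
    ∃ z₀ z₁ : ℝ, 0 < z₀ ∧ z₀ < 1 ∧ 1 < z₁ ∧
      {z : ℝ | 0 < z ∧ g z = 0} = {z₀, z₁} ∧
      (∀ z : ℝ, 0 < z → (g z < 0 ↔ z ∈ Set.Ioo z₀ z₁)) := by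
  obtain rfl : g = exceedanceG := funext hg
  exact ⟨exceedanceG.apply_one, fun _ hz => exceedanceG.deriv_eq_zero_iff hz,
    exceedanceG.tendsto_nhdsGT_zero, exceedanceG.tendsto_atTop,
    exists_two_zeros_of_strictAntiOn_of_strictMonoOn one_pos exceedanceG.continuousOn
      exceedanceG.strictAntiOn exceedanceG.strictMonoOn (by norm_num [exceedanceG.apply_one])
      exceedanceG.tendsto_nhdsGT_zero exceedanceG.tendsto_atTop⟩
end
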